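/- Let m ≥ 3 and let a, b, c, d ∈ V = 𝔽₂^{2m} be such that a, c, d are pairwise distinct and b, c, d are pairwise distinct. Then the following are equivalent: (i) there exist A ∈ Sp_{2m}(2) and w ∈ V such that the affine map p ↦ pA + w fixes c and d and sends a to b (i.e. cA + w = c, dA + w = d, aA + w = b); (ii) φ(a,c) + φ(a,d) = φ(b,c) + φ(b,d). (This identifies the orbits of the affine symplectic group 2^{2m}.Sp_{2m}(2) on 3-element subsets of V: {v₁,v₂,v₃} and {w₁,w₂,w₃} lie in the same orbit exactly when φ(v₁,v₂)+φ(v₁,v₃)+φ(v₂,v₃) = φ(w₁,w₂)+φ(w₁,w₃)+φ(w₂,w₃).) -/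
import Mathlib


open Matrix

/-- Row vectors in `𝔽₂^{2m}`, with coordinates indexed by `Fin m ⊕ Fin m`
(the first block and the second block of `m` coordinates). -/
abbrev Vm (m : ℕ) := (Fin m ⊕ Fin m) → ZMod 2

/-- The block matrix `e = (0 Iₘ; 0 0)`. -/
def eMat (m : ℕ) : Matrix (Fin m ⊕ Fin m) (Fin m ⊕ Fin m) (ZMod 2) :=
  Matrix.fromBlocks 0 1 0 0

/-- The block matrix `f = e + eᵀ = (0 Iₘ; Iₘ 0)`. -/
def fMat (m : ℕ) : Matrix (Fin m ⊕ Fin m) (Fin m ⊕ Fin m) (ZMod 2) :=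
  eMat m + (eMat m)ᵀ

/-- The alternating bilinear form `φ(u,v) = u f vᵀ`. -/
def phi (m : ℕ) (u v : Vm m) : ZMod 2 := u ⬝ᵥ (fMat m).mulVec v

/-- The quadratic form `θ₀(u) = u e uᵀ`. -/
def theta0 (m : ℕ) (u : Vm m) : ZMod 2 := u ⬝ᵥ (eMat m).mulVec u

/-- The quadratic form `θ_a(u) = θ₀(u) + φ(u,a)`. -/
def theta (m : ℕ) (a u : Vm m) : ZMod 2 := theta0 m u + phi m u a

/-- The transvection `t_c : u ↦ u + φ(u,c)·c`. -/
def tvec (m : ℕ) (c u : Vm m) : Vm m := u + phi m u c • c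

/-! ### Auxiliary lemmas -/

lemma vm_add_self {m : ℕ} (x : Vm m) : x + x = 0 :=
  funext fun _ => CharTwo.add_self_eq_zero _

lemma vm_add_eq_zero {m : ℕ} {x y : Vm m} (h : x + y = 0) : x = y := by
  have : x + (y + y) = (x + y) + y := by rw [add_assoc]
  rw [vm_add_self, h, zero_add, add_zero] at this
  exact this

lemma fMat_transpose (m : ℕ) : (fMat m)ᵀ = fMat m := by
  simp [fMat, Matrix.transpose_add, add_comm]

lemma fMat_mul_self (m : ℕ) : fMat m * fMat m = 1 := by
  have : fMat m = Matrix.fromBlocks 0 1 1 0 := by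
    simp [fMat, eMat, Matrix.fromBlocks_transpose, Matrix.fromBlocks_add]
  rw [this]
  simp [Matrix.fromBlocks_multiply, ← Matrix.fromBlocks_one]

lemma phi_comm {m : ℕ} (u v : Vm m) : phi m u v = phi m v u := by
  unfold phi
  rw [Matrix.dotProduct_mulVec, ← fMat_transpose m, Matrix.vecMul_transpose,
    dotProduct_comm, fMat_transpose]

lemma phi_add_left {m : ℕ} (u v w : Vm m) :
    phi m (u + v) w = phi m u w + phi m v w := by
  simp [phi, add_dotProduct]

lemma phi_add_right {m : ℕ} (u v w : Vm m) :
    phi m u (v + w) = phi m u v + phi m u w := by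
  simp [phi, Matrix.mulVec_add, dotProduct_add]

lemma phi_smul_right {m : ℕ} (r : ZMod 2) (u v : Vm m) :
    phi m u (r • v) = r * phi m u v := by
  simp [phi, Matrix.mulVec_smul, dotProduct_smul, smul_eq_mul, mul_comm]

lemma phi_smul_left {m : ℕ} (r : ZMod 2) (u v : Vm m) :
    phi m (r • u) v = r * phi m u v := by
  simp [phi, smul_dotProduct, smul_eq_mul]

lemma phi_self {m : ℕ} (v : Vm m) : phi m v v = 0 := by
  unfold phi fMat
  rw [Matrix.add_mulVec, dotProduct_add, Matrix.mulVec_transpose,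
    Matrix.dotProduct_mulVec, dotProduct_comm]
  exact CharTwo.add_self_eq_zero _

lemma phi_fMat_mulVec {m : ℕ} (u y : Vm m) :
    phi m u ((fMat m).mulVec y) = u ⬝ᵥ y := by
  unfold phi
  rw [Matrix.mulVec_mulVec, fMat_mul_self, Matrix.one_mulVec]

/-- matrix equality from all dot products -/
lemma ext_of_dot {m : ℕ} {M N : Matrix (Fin m ⊕ Fin m) (Fin m ⊕ Fin m) (ZMod 2)}
    (h : ∀ u w : Vm m, u ⬝ᵥ M.mulVec w = u ⬝ᵥ N.mulVec w) : M = N := by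
  ext i j
  have := h (Pi.single i 1) (Pi.single j 1)
  simpa [Matrix.mulVec_single, single_dotProduct] using this

lemma vecMul_vecMulVec {m : ℕ} (u x v : Vm m) :
    Matrix.vecMul u (Matrix.vecMulVec x v) = (u ⬝ᵥ x) • v := by
  funext j
  simp only [Matrix.vecMul, Matrix.vecMulVec_apply, dotProduct, Pi.smul_apply, smul_eq_mul]
  rw [Finset.sum_mul]
  exact Finset.sum_congr rfl fun i _ => by ring

lemma dot_vecMul_quad {m : ℕ} (A M : Matrix (Fin m ⊕ Fin m) (Fin m ⊕ Fin m) (ZMod 2))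
    (u v : Vm m) :
    (Matrix.vecMul u A) ⬝ᵥ M.mulVec (Matrix.vecMul v A) = u ⬝ᵥ (A * M * Aᵀ).mulVec v := by
  have h1 : Matrix.vecMul v A = Aᵀ.mulVec v := (Matrix.mulVec_transpose A v).symm
  rw [h1, Matrix.mulVec_mulVec, Matrix.dotProduct_mulVec, Matrix.dotProduct_mulVec,
    Matrix.vecMul_vecMul, Matrix.mul_assoc]

lemma phi_vecMul {m : ℕ} {A : Matrix (Fin m ⊕ Fin m) (Fin m ⊕ Fin m) (ZMod 2)}
    (hA : A * fMat m * Aᵀ = fMat m) (u v : Vm m) :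
    phi m (Matrix.vecMul u A) (Matrix.vecMul v A) = phi m u v := by
  unfold phi
  rw [dot_vecMul_quad, hA]

/-- The matrix of the transvection `t_v`. -/
def tM (m : ℕ) (v : Vm m) : Matrix (Fin m ⊕ Fin m) (Fin m ⊕ Fin m) (ZMod 2) :=
  1 + Matrix.vecMulVec ((fMat m).mulVec v) v

lemma vecMul_tM {m : ℕ} (u v : Vm m) :
    Matrix.vecMul u (tM m v) = u + phi m u v • v := by
  unfold tM
  rw [Matrix.vecMul_add, Matrix.vecMul_one, vecMul_vecMulVec]
  rfl

lemma tM_symp {m : ℕ} (v : Vm m) : tM m v * fMat m * (tM m v)ᵀ = fMat m := by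
  apply ext_of_dot
  intro u w
  rw [← dot_vecMul_quad]
  have : (Matrix.vecMul u (tM m v)) ⬝ᵥ (fMat m).mulVec (Matrix.vecMul w (tM m v))
      = phi m (u + phi m u v • v) (w + phi m w v • v) := by
    rw [vecMul_tM, vecMul_tM]; rfl
  rw [this]
  show _ = phi m u w
  rw [phi_add_left, phi_add_right, phi_add_right, phi_smul_right, phi_smul_right,
    phi_smul_left, phi_smul_left, phi_self, phi_comm v w]
  have h2 : (2 : ZMod 2) = 0 := by decide
  linear_combination (phi m u v * phi m w v) * h2

/-- existence of a vector with prescribed dot products -/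
lemma exists_dot3 {ι : Type*} [Fintype ι] [DecidableEq ι]
    (u : Fin 3 → (ι → ZMod 2)) (t : Fin 3 → ZMod 2)
    (h : ∀ c : Fin 3 → ZMod 2, (∑ i, c i • u i) = 0 → (∑ i, c i * t i) = 0) :
    ∃ y : ι → ZMod 2, ∀ i, u i ⬝ᵥ y = t i := by
  set L : (ι → ZMod 2) →ₗ[ZMod 2] (Fin 3 → ZMod 2) :=
    { toFun := fun y i => u i ⬝ᵥ y
      map_add' := fun x y => by funext i; simp [dotProduct_add]
      map_smul' := fun r x => by funext i; simp [dotProduct_smul] } with hL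
  have ht : t ∈ LinearMap.range L := by
    rw [← Subspace.forall_mem_dualAnnihilator_apply_eq_zero_iff (LinearMap.range L) t]
    intro φ hφ
    set c : Fin 3 → ZMod 2 := fun i => φ (fun j => if i = j then 1 else 0) with hc
    have hφx : ∀ x : Fin 3 → ZMod 2, φ x = ∑ i, c i * x i := by
      intro x
      rw [LinearMap.pi_apply_eq_sum_univ φ x]
      exact Finset.sum_congr rfl fun i _ => by rw [smul_eq_mul, mul_comm]
    have hrel : (∑ i, c i • u i) = 0 := by
      funext j
      have h0 := (Submodule.mem_dualAnnihilator φ).mp hφ (L (Pi.single j 1))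
        ⟨Pi.single j 1, rfl⟩
      rw [hφx] at h0
      simpa [hL, dotProduct_single, Finset.sum_apply, smul_eq_mul] using h0
    rw [hφx]
    rw [show (∑ i, c i * t i) = 0 from h c hrel]
  obtain ⟨y, hy⟩ := ht
  exact ⟨y, fun i => congrFun hy i⟩

/-- Packaging: from a symplectic matrix fixing `d+c` and sending `a+c` to `b+c`,
build the affine map. -/
lemma mk_affine {m : ℕ} (a b c d : Vm m)
    (A : Matrix (Fin m ⊕ Fin m) (Fin m ⊕ Fin m) (ZMod 2))
    (hA : A * fMat m * Aᵀ = fMat m)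
    (hd2 : Matrix.vecMul (d + c) A = d + c)
    (ha2 : Matrix.vecMul (a + c) A = b + c) :
    (∃ (A : Matrix (Fin m ⊕ Fin m) (Fin m ⊕ Fin m) (ZMod 2)) (w : Vm m),
        A * fMat m * Aᵀ = fMat m ∧
        Matrix.vecMul c A + w = c ∧
        Matrix.vecMul d A + w = d ∧
        Matrix.vecMul a A + w = b) := by
  refine ⟨A, c + Matrix.vecMul c A, hA, ?_, ?_, ?_⟩
  · rw [add_comm c (Matrix.vecMul c A), ← add_assoc, vm_add_self, zero_add]
  · rw [Matrix.add_vecMul] at hd2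
    calc Matrix.vecMul d A + (c + Matrix.vecMul c A)
        = (Matrix.vecMul d A + Matrix.vecMul c A) + c := by
          rw [add_comm c (Matrix.vecMul c A), ← add_assoc]
      _ = (d + c) + c := by rw [hd2]
      _ = d := by rw [add_assoc, vm_add_self, add_zero]
  · rw [Matrix.add_vecMul] at ha2
    calc Matrix.vecMul a A + (c + Matrix.vecMul c A)
        = (Matrix.vecMul a A + Matrix.vecMul c A) + c := by
          rw [add_comm c (Matrix.vecMul c A), ← add_assoc]
      _ = (b + c) + c := by rw [ha2]
      _ = b := by rw [add_assoc, vm_add_self, add_zero]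

theorem stmt_3 (m : ℕ) (hm : 3 ≤ m) (a b c d : Vm m)
    (hac : a ≠ c) (had : a ≠ d) (hcd : c ≠ d) (hbc : b ≠ c) (hbd : b ≠ d) :
    (∃ (A : Matrix (Fin m ⊕ Fin m) (Fin m ⊕ Fin m) (ZMod 2)) (w : Vm m),
        A * fMat m * Aᵀ = fMat m ∧
        Matrix.vecMul c A + w = c ∧
        Matrix.vecMul d A + w = d ∧
        Matrix.vecMul a A + w = b) ↔
      phi m a c + phi m a d = phi m b c + phi m b d := by
  constructor
  · rintro ⟨A, w, hA, hc, hd, ha⟩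
    have hmov : ∀ x y : Vm m, Matrix.vecMul x A + w = y → Matrix.vecMul x A = y + w := by
      intro x y hxy
      rw [← hxy, add_assoc, vm_add_self, add_zero]
    have hc' := hmov c c hc
    have hd' := hmov d d hd
    have ha' := hmov a b ha
    have e1 : phi m (b + w) (c + w) = phi m a c := by
      rw [← ha', ← hc']; exact phi_vecMul hA a c
    have e2 : phi m (b + w) (d + w) = phi m a d := by
      rw [← ha', ← hd']; exact phi_vecMul hA a d
    have e3 : phi m (c + w) (d + w) = phi m c d := by
      rw [← hc', ← hd']; exact phi_vecMul hA c d
    rw [phi_add_left, phi_add_right, phi_add_right, phi_self, add_zero] at e1 e2 e3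
    have h2 : (2 : ZMod 2) = 0 := by decide
    linear_combination (-1 : ZMod 2) * e1 - e2 + e3 - phi_comm c w + phi m b w * h2
  · intro h
    set a' := a + c with ha'
    set b' := b + c with hb'
    set d' := d + c with hd'
    have heps : phi m a' d' = phi m b' d' := by
      simp only [ha', hb', hd', phi_add_left, phi_add_right, phi_self, add_zero]
      linear_combination h
    have two : ∀ x : ZMod 2, x = 0 ∨ x = 1 := by decide
    by_cases hab : a = b
    · refine ⟨1, 0, ?_, ?_, ?_, ?_⟩ <;>
        simp [Matrix.transpose_one, Matrix.vecMul_one, hab]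
    · have hab' : a' ≠ b' := fun hE => hab (by
        have : a' + c = b' + c := by rw [hE]
        rwa [ha', hb', add_assoc, add_assoc, vm_add_self, add_zero, add_zero] at this)
      rcases two (phi m a' b') with hq0 | hq1
      · -- need an intermediate vector z
        have hane : a' ≠ 0 := fun hE => hac (vm_add_eq_zero (by rw [← ha', hE]))
        have hbne : b' ≠ 0 := fun hE => hbc (vm_add_eq_zero (by rw [← hb', hE]))
        have hdne : d' ≠ 0 := fun hE => hcd (vm_add_eq_zero (by rw [← hd', hE])).symm
        have hadne : a' ≠ d' := fun hE => had (by
          have : a' + c = d' + c := by rw [hE]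
          rwa [ha', hd', add_assoc, add_assoc, vm_add_self, add_zero, add_zero] at this)
        have hbdne : b' ≠ d' := fun hE => hbd (by
          have : b' + c = d' + c := by rw [hE]
          rwa [hb', hd', add_assoc, add_assoc, vm_add_self, add_zero, add_zero] at this)
        obtain ⟨y, hy⟩ := exists_dot3 ![a', b', d'] ![1, 1, phi m a' d'] (by
          intro cc hcc
          rw [Fin.sum_univ_three] at hcc
          rw [Fin.sum_univ_three]
          simp only [Matrix.cons_val_zero, Matrix.cons_val_one, Matrix.head_cons,
            Matrix.cons_val_two, Matrix.tail_cons] at hcc ⊢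
          rcases two (cc 0) with h0 | h0 <;> rcases two (cc 1) with h1 | h1 <;>
            rcases two (cc 2) with h2 | h2 <;>
            rw [h0, h1, h2] at hcc ⊢ <;>
            simp only [zero_smul, one_smul, zero_add, add_zero, zero_mul, one_mul] at hcc ⊢
          · exact absurd hcc hdne
          · exact absurd hcc hbne
          · exact absurd (vm_add_eq_zero hcc) hbdne
          · exact absurd hcc hane
          · exact absurd (vm_add_eq_zero hcc) hadne
          · exact absurd (vm_add_eq_zero hcc) hab'
          · -- a' + b' + d' = 0, so d' = a' + b' and φ(a',d') = φ(a',b') = 0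
            have hd2 : a' + b' = d' := vm_add_eq_zero hcc
            have hz0 : phi m a' d' = 0 := by
              rw [← hd2, phi_add_right, phi_self, zero_add, hq0]
            rw [hz0]
            decide)
        set z := (fMat m).mulVec y with hz
        have hz1 : phi m a' z = 1 := by
          rw [hz, phi_fMat_mulVec]; simpa using hy 0
        have hz2 : phi m b' z = 1 := by
          rw [hz, phi_fMat_mulVec]; simpa using hy 1
        have hz3 : phi m d' z = phi m a' d' := by
          rw [hz, phi_fMat_mulVec]; simpa using hy 2
        apply mk_affine a b c d (tM m (a' + z) * tM m (z + b'))
        · calc tM m (a' + z) * tM m (z + b') * fMat m * (tM m (a' + z) * tM m (z + b'))ᵀ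
              = tM m (a' + z) * (tM m (z + b') * fMat m * (tM m (z + b'))ᵀ)
                * (tM m (a' + z))ᵀ := by
                rw [Matrix.transpose_mul]; simp only [Matrix.mul_assoc]
            _ = tM m (a' + z) * fMat m * (tM m (a' + z))ᵀ := by rw [tM_symp]
            _ = fMat m := tM_symp _
        · have hc1 : phi m d' (a' + z) = 0 := by
            rw [phi_add_right, phi_comm d' a', hz3]
            exact CharTwo.add_self_eq_zero _
          have hc2 : phi m d' (z + b') = 0 := by
            rw [phi_add_right, hz3, phi_comm d' b', heps]
            exact CharTwo.add_self_eq_zero _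
          rw [← hd', ← Matrix.vecMul_vecMul, vecMul_tM d' (a' + z), hc1, zero_smul,
            add_zero, vecMul_tM d' (z + b'), hc2, zero_smul, add_zero]
        · have ha1 : phi m a' (a' + z) = 1 := by
            rw [phi_add_right, phi_self, zero_add, hz1]
          have hb1 : phi m z (z + b') = 1 := by
            rw [phi_add_right, phi_self, zero_add, phi_comm z b', hz2]
          rw [← ha', ← hb', ← Matrix.vecMul_vecMul, vecMul_tM a' (a' + z), ha1, one_smul,
            ← add_assoc, vm_add_self, zero_add, vecMul_tM z (z + b'), hb1, one_smul,
            ← add_assoc, vm_add_self, zero_add]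
      · -- single transvection t_{a'+b'}
        apply mk_affine a b c d (tM m (a' + b')) (tM_symp _)
        · rw [← hd', vecMul_tM]
          have : phi m d' (a' + b') = 0 := by
            rw [phi_add_right, phi_comm d' a', phi_comm d' b', heps]
            exact CharTwo.add_self_eq_zero _
          rw [this, zero_smul, add_zero]
        · rw [← ha', ← hb', vecMul_tM]
          rw [phi_add_right, phi_self, zero_add, hq1, one_smul, ← add_assoc,
            vm_add_self, zero_add]
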